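/- arXiv:1205.6627 — 2 statements merged into one kernel-verified Lean document; each statement's English description precedes it below -/
import Mathlib

section
/- If x, y ∈ X are distinct and not adjacent in G (i.e. ¬Adj x y), then ⁅ι x, ι y⁆ ≠ 0 in L. -/
/-
Send `x ↦ E₀₁` and `y ↦ E₁₂` (matrix units in `𝔤𝔩₃(R)`) and every other generator to `0`.
Since `x` and `y` are not adjacent, every defining relation `⁅a, b⁆` with `G.Adj a b` involves a
generator sent to `0`, so this map factors through `L_R(X; G)`; yet it sends `⁅ι x, ι y⁆` to
`⁅E₀₁, E₁₂⁆ = E₀₂ ≠ 0`.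
-/

noncomputable section

/-- The Lie ideal of relations of the partially commutative Lie algebra:
it is generated by the brackets `⁅x, y⁆` of generators with `G.Adj x y`. -/
def pcIdeal (R : Type*) [CommRing R] {X : Type*} (G : SimpleGraph X) :
    LieIdeal R (FreeLieAlgebra R X) :=
  LieSubmodule.lieSpan R (FreeLieAlgebra R X)
    {w | ∃ x y : X, G.Adj x y ∧ w = ⁅FreeLieAlgebra.of R x, FreeLieAlgebra.of R y⁆}

/-- The partially commutative Lie algebra `L_R(X; G)`. -/
abbrev PCLieAlgebra (R : Type*) [CommRing R] (X : Type*) (G : SimpleGraph X) :=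
  FreeLieAlgebra R X ⧸ pcIdeal R G

/-- The canonical image `ι x` of a generator `x : X` in `L_R(X; G)`. -/
def pcGen (R : Type*) [CommRing R] {X : Type*} (G : SimpleGraph X) (x : X) :
    PCLieAlgebra R X G :=
  LieSubmodule.Quotient.mk (N := pcIdeal R G) (FreeLieAlgebra.of R x)

/-- The Lie `R`-subalgebra `⟨Y⟩` of `L_R(X; G)` generated by `{ι y : y ∈ Y}`. -/
def genSpan (R : Type*) [CommRing R] {X : Type*} (G : SimpleGraph X) (Y : Set X) :
    LieSubalgebra R (PCLieAlgebra R X G) :=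
  LieSubalgebra.lieSpan R (PCLieAlgebra R X G) (pcGen R G '' Y)

/-- The complement graph on a subset `Y ⊆ X`: distinct vertices of `Y` are adjacent
iff they are not adjacent in `G`. -/
def complOn {X : Type*} (G : SimpleGraph X) (Y : Set X) : SimpleGraph Y where
  Adj a b := (a : X) ≠ (b : X) ∧ ¬ G.Adj a b
  symm := ⟨fun _ _ h => ⟨fun e => h.1 e.symm, fun e => h.2 e.symm⟩⟩
  loopless := ⟨fun _ h => h.1 rfl⟩

/-- The vertex set (as a subset of `X`) of a connected component of the
complement graph on `Y`. -/
def compSet {X : Type*} (G : SimpleGraph X) (Y : Set X)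
    (c : (complOn G Y).ConnectedComponent) : Set X :=
  {x : X | ∃ hx : x ∈ Y, (complOn G Y).connectedComponentMk ⟨x, hx⟩ = c}

/-- `Y` is the support of `g`: `g ∈ ⟨Y⟩`, and `Y ⊆ Z` whenever `g ∈ ⟨Z⟩`. -/
def isSupport (R : Type*) [CommRing R] {X : Type*} (G : SimpleGraph X)
    (g : PCLieAlgebra R X G) (Y : Set X) : Prop :=
  g ∈ genSpan R G Y ∧ ∀ Z : Set X, g ∈ genSpan R G Z → Y ⊆ Z

attribute [local instance] LieRing.ofAssociativeRing

theorem Matrix.lie_single_single_of_ne {n α : Type*} [Fintype n] [DecidableEq n] [Ring α]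
    {i k : n} (j : n) (hik : i ≠ k) (a b : α) :
    ⁅single i j a, single j k b⁆ = single i k (a * b) := by
  simp [Ring.lie_def, hik.symm]

section PCLieAlgebra

variable {R : Type*} [CommRing R] {X : Type*} {G : SimpleGraph X}
  {A : Type*} [LieRing A] [LieAlgebra R A]

theorem pcIdeal_le_ker_lift {f : X → A} (hf : ∀ a b, G.Adj a b → ⁅f a, f b⁆ = 0) :
    pcIdeal R G ≤ (FreeLieAlgebra.lift R f).ker := by
  rw [pcIdeal, LieSubmodule.lieSpan_le]
  rintro _ ⟨a, b, hab, rfl⟩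
  simp [hf a b hab]

theorem lie_eq_zero_of_lie_pcGen_eq_zero {f : X → A} (hf : ∀ a b, G.Adj a b → ⁅f a, f b⁆ = 0)
    {x y : X} (h : ⁅pcGen R G x, pcGen R G y⁆ = 0) : ⁅f x, f y⁆ = 0 := by
  rw [pcGen, pcGen, ← LieSubmodule.Quotient.mk_bracket, LieSubmodule.Quotient.mk_eq_zero'] at h
  simpa using LieHom.mem_ker.mp (pcIdeal_le_ker_lift hf h)

open Function in
theorem lie_update_update_zero_eq_zero_of_adj [DecidableEq X] {x y : X} (hxy : ¬ G.Adj x y)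
    (u v : A) (a b : X) (hab : G.Adj a b) :
    ⁅update (update (0 : X → A) y v) x u a, update (update (0 : X → A) y v) x u b⁆ = 0 := by
  by_cases hb : b = x ∨ b = y
  · obtain ⟨hax, hay⟩ : a ≠ x ∧ a ≠ y := by
      rcases hb with rfl | rfl
      · exact ⟨hab.ne, fun ha => hxy (ha ▸ hab.symm)⟩
      · exact ⟨fun ha => hxy (ha ▸ hab), hab.ne⟩
    simp [update_of_ne hax, update_of_ne hay]
  · push Not at hb
    simp [update_of_ne hb.1, update_of_ne hb.2]

end PCLieAlgebra

theorem bracket_generators_ne_zero_general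
    (R : Type*) [CommRing R] [IsDomain R] (X : Type*) (G : SimpleGraph X)
    (x y : X) (hxy : x ≠ y) (hadj : ¬ G.Adj x y) :
    ⁅pcGen R G x, pcGen R G y⁆ ≠ 0 := by
  classical
  intro h
  have hmat := lie_eq_zero_of_lie_pcGen_eq_zero
    (lie_update_update_zero_eq_zero_of_adj hadj
      (Matrix.single (0 : Fin 3) (1 : Fin 3) (1 : R)) (Matrix.single (1 : Fin 3) (2 : Fin 3) 1)) h
  rw [Function.update_self, Function.update_of_ne hxy.symm, Function.update_self,
    Matrix.lie_single_single_of_ne 1 (by decide)] at hmat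
  simpa using congr_fun₂ hmat 0 2

/-- Brackets of distinct non-adjacent generators are nonzero in `L_R(X; G)`. -/
theorem bracket_generators_ne_zero
    (R : Type*) [CommRing R] [IsDomain R] (X : Type*) [Fintype X] (G : SimpleGraph X)
    (x y : X) (hxy : x ≠ y) (hadj : ¬ G.Adj x y) :
    ⁅pcGen R G x, pcGen R G y⁆ ≠ 0 :=
  bracket_generators_ne_zero_general R X G x y hxy hadj
end
end

section
/- Let Y ⊆ X and let t be an element of the free magma on X (a formal nonassociative bracketing of a nonempty word in the letters X); let ev(t) ∈ L be the evaluation of t obtained by sending each letter x to ι x and magma multiplication to the Lie bracket of L, and let letters(t) ⊆ X be the set of letters occurring in t. If letters(t) ⊆ Y and ev(t) ≠ 0, then letters(t) is contained in the vertex set of a single connected component of the complement graph on Y. -/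
noncomputable section

/-- Evaluation of a formal nonassociative word in the letters `X` in the partially
commutative Lie algebra: letters go to generators, magma multiplication to the bracket. -/
def magmaEval (R : Type*) [CommRing R] {X : Type*} (G : SimpleGraph X) :
    FreeMagma X → PCLieAlgebra R X G
  | FreeMagma.of x => pcGen R G x
  | FreeMagma.mul a b => ⁅magmaEval R G a, magmaEval R G b⁆

/-- The set of letters occurring in a formal nonassociative word. -/
def magmaLetters {X : Type*} : FreeMagma X → Set X
  | FreeMagma.of x => {x}
  | FreeMagma.mul a b => magmaLetters a ∪ magmaLetters b


/-
Proof idea: induct on the word. If `t = a * b` with `[ev a, ev b] ≠ 0`, both factors are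
nonzero, so by induction the letters of `a` lie in one component `c` and those of `b` in one
component `c'`. Were `c ≠ c'`, every letter of `a` would be `G`-adjacent to every letter of
`b`, hence the generators would commute, and by Jacobi/Leibniz so would `ev a` and `ev b`.
-/

section

variable {R : Type*} [CommRing R] {X : Type*} {G : SimpleGraph X}

lemma pcGen_lie_pcGen_eq_zero {x y : X} (h : G.Adj x y) : ⁅pcGen R G x, pcGen R G y⁆ = 0 := by
  rw [pcGen, pcGen, ← LieSubmodule.Quotient.mk_bracket, LieSubmodule.Quotient.mk_eq_zero']
  exact LieSubmodule.subset_lieSpan ⟨x, y, h, rfl⟩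

lemma magmaEval_mul (a b : FreeMagma X) :
    magmaEval R G (a * b) = ⁅magmaEval R G a, magmaEval R G b⁆ :=
  rfl

lemma magmaEval_lie_pcGen_eq_zero (a : FreeMagma X) {y : X}
    (h : ∀ x ∈ magmaLetters a, ⁅pcGen R G x, pcGen R G y⁆ = 0) :
    ⁅magmaEval R G a, pcGen R G y⁆ = 0 := by
  induction a with
  | ih1 x => exact h x rfl
  | ih2 a b iha ihb =>
    rw [magmaEval_mul, lie_lie, iha fun x hx => h x (Or.inl hx),
      ihb fun x hx => h x (Or.inr hx), lie_zero, lie_zero, sub_zero]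

lemma magmaEval_lie_magmaEval_eq_zero (a b : FreeMagma X)
    (h : ∀ x ∈ magmaLetters a, ∀ y ∈ magmaLetters b, ⁅pcGen R G x, pcGen R G y⁆ = 0) :
    ⁅magmaEval R G a, magmaEval R G b⁆ = 0 := by
  induction b with
  | ih1 y => exact magmaEval_lie_pcGen_eq_zero a fun x hx => h x hx y rfl
  | ih2 b₁ b₂ ih₁ ih₂ =>
    rw [magmaEval_mul, leibniz_lie, ih₁ fun x hx y hy => h x hx y (Or.inl hy),
      ih₂ fun x hx y hy => h x hx y (Or.inr hy), zero_lie, lie_zero, add_zero]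

end

lemma adj_of_mem_compSet_of_ne {X : Type*} {G : SimpleGraph X} {Y : Set X}
    {c c' : (complOn G Y).ConnectedComponent} {x y : X} (hx : x ∈ compSet G Y c)
    (hy : y ∈ compSet G Y c') (hcc : c ≠ c') : G.Adj x y := by
  obtain ⟨hxY, rfl⟩ := hx
  obtain ⟨hyY, rfl⟩ := hy
  by_contra hadj
  have hxy : x ≠ y := by
    rintro rfl
    exact hcc rfl
  exact hcc (SimpleGraph.ConnectedComponent.connectedComponentMk_eq_of_adj ⟨hxy, hadj⟩)

theorem letters_in_single_component_general
    (R : Type*) [CommRing R] (X : Type*) (G : SimpleGraph X)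
    (Y : Set X) (t : FreeMagma X)
    (hlet : magmaLetters t ⊆ Y) (hne : magmaEval R G t ≠ 0) :
    ∃ c : (complOn G Y).ConnectedComponent, magmaLetters t ⊆ compSet G Y c := by
  induction t with
  | ih1 x =>
    have hx : x ∈ Y := hlet rfl
    exact ⟨(complOn G Y).connectedComponentMk ⟨x, hx⟩, by
      rintro _ rfl
      exact ⟨hx, rfl⟩⟩
  | ih2 a b iha ihb =>
    rw [magmaEval_mul] at hne
    obtain ⟨c, hc⟩ := iha (fun z hz => hlet (Or.inl hz)) fun h => hne (by rw [h, zero_lie])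
    obtain ⟨c', hc'⟩ := ihb (fun z hz => hlet (Or.inr hz)) fun h => hne (by rw [h, lie_zero])
    obtain rfl | hcc := eq_or_ne c c'
    · exact ⟨c, Set.union_subset hc hc'⟩
    · exact absurd (magmaEval_lie_magmaEval_eq_zero a b fun x hx y hy =>
        pcGen_lie_pcGen_eq_zero (adj_of_mem_compSet_of_ne (hc hx) (hc' hy) hcc)) hne

/-- If a nonassociative word in letters from `Y` evaluates to a nonzero element of
`L_R(X; G)`, then all its letters lie in a single connected component of the
complement graph on `Y`. -/
theorem letters_in_single_component
    (R : Type*) [CommRing R] [IsDomain R] (X : Type*) [Fintype X] (G : SimpleGraph X)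
    (Y : Set X) (t : FreeMagma X)
    (hlet : magmaLetters t ⊆ Y) (hne : magmaEval R G t ≠ 0) :
    ∃ c : (complOn G Y).ConnectedComponent, magmaLetters t ⊆ compSet G Y c :=
  letters_in_single_component_general R X G Y t hlet hne
end
end
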